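/- arXiv:2109.12080 — 5 statements merged into one kernel-verified Lean document; each statement's English description precedes it below -/
import Mathlib

section
/- Let x₀,…,xₙ and x₀',…,xₙ' be points in ℝ^d with Σⱼ d(xⱼ₋₁,xⱼ) = L and Σⱼ d(xⱼ₋₁',xⱼ') = L, and let t ∈ (0,1) with yⱼ := (1-t)•xⱼ + t•xⱼ'. Then Σⱼ d(yⱼ₋₁,yⱼ) = L if and only if for every j, the vectors xⱼ - xⱼ₋₁ and xⱼ' - xⱼ₋₁' satisfy ‖xⱼ' - xⱼ₋₁'‖•(xⱼ - xⱼ₋₁) = ‖xⱼ - xⱼ₋₁‖•(xⱼ' - xⱼ₋₁'). -/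
private lemma sameRay_smul_smul_iff {E : Type*} [NormedAddCommGroup E] [NormedSpace ℝ E]
    {r s : ℝ} (hr : 0 < r) (hs : 0 < s) (a b : E) :
    SameRay ℝ (r • a) (s • b) ↔ SameRay ℝ a b := by
  constructor
  · intro h
    have := (h.pos_smul_left (inv_pos.2 hr)).pos_smul_right (inv_pos.2 hs)
    simpa [smul_smul, inv_mul_cancel₀ hr.ne', inv_mul_cancel₀ hs.ne'] using this
  · intro h
    exact (h.pos_smul_left hr).pos_smul_right hs

theorem stmt_2 {d n : ℕ} (x x' : Fin (n + 1) → EuclideanSpace ℝ (Fin d)) (L : ℝ)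
    (hx : ∑ j : Fin n, dist (x j.castSucc) (x j.succ) = L)
    (hx' : ∑ j : Fin n, dist (x' j.castSucc) (x' j.succ) = L)
    (t : ℝ) (ht : t ∈ Set.Ioo (0 : ℝ) 1)
    (y : Fin (n + 1) → EuclideanSpace ℝ (Fin d))
    (hy : ∀ j, y j = (1 - t) • x j + t • x' j) :
    ∑ j : Fin n, dist (y j.castSucc) (y j.succ) = L ↔
      ∀ j : Fin n,
        ‖x' j.succ - x' j.castSucc‖ • (x j.succ - x j.castSucc) =
          ‖x j.succ - x j.castSucc‖ • (x' j.succ - x' j.castSucc) := by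
  obtain ⟨ht0, ht1⟩ := ht
  have h1t : 0 < 1 - t := by linarith
  set a : Fin n → EuclideanSpace ℝ (Fin d) := fun j => x j.succ - x j.castSucc with ha
  set b : Fin n → EuclideanSpace ℝ (Fin d) := fun j => x' j.succ - x' j.castSucc with hb
  have hysub : ∀ j : Fin n, y j.succ - y j.castSucc = (1 - t) • a j + t • b j := by
    intro j
    simp only [hy, ha, hb]
    module
  have hd : ∀ j : Fin n, dist (y j.castSucc) (y j.succ) = ‖(1 - t) • a j + t • b j‖ := by
    intro j
    rw [dist_comm, dist_eq_norm, hysub j]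
  have hle : ∀ j ∈ Finset.univ, ‖(1 - t) • a j + t • b j‖
      ≤ (1 - t) * ‖a j‖ + t * ‖b j‖ := by
    intro j _
    calc ‖(1 - t) • a j + t • b j‖ ≤ ‖(1 - t) • a j‖ + ‖t • b j‖ := norm_add_le _ _
    _ = (1 - t) * ‖a j‖ + t * ‖b j‖ := by
        rw [norm_smul, norm_smul, Real.norm_of_nonneg h1t.le, Real.norm_of_nonneg ht0.le]
  have hsum : ∑ j : Fin n, ((1 - t) * ‖a j‖ + t * ‖b j‖) = L := by
    rw [Finset.sum_add_distrib, ← Finset.mul_sum, ← Finset.mul_sum]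
    have h1 : ∑ j : Fin n, ‖a j‖ = L := by
      rw [← hx]; exact Finset.sum_congr rfl fun j _ => (dist_eq_norm _ _).symm.trans (by rw [dist_comm, dist_eq_norm])
    have h2 : ∑ j : Fin n, ‖b j‖ = L := by
      rw [← hx']; exact Finset.sum_congr rfl fun j _ => by rw [dist_comm, dist_eq_norm]
    rw [h1, h2]; ring
  have key : (∑ j : Fin n, dist (y j.castSucc) (y j.succ) = L) ↔
      ∀ j : Fin n, ‖(1 - t) • a j + t • b j‖ = (1 - t) * ‖a j‖ + t * ‖b j‖ := by
    rw [Finset.sum_congr rfl fun j _ => hd j, ← hsum]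
    rw [Finset.sum_eq_sum_iff_of_le hle]
    simp
  rw [key]
  apply forall_congr'
  intro j
  have : ((1 - t) * ‖a j‖ + t * ‖b j‖) = ‖(1 - t) • a j‖ + ‖t • b j‖ := by
    rw [norm_smul, norm_smul, Real.norm_of_nonneg h1t.le, Real.norm_of_nonneg ht0.le]
  rw [this, ← sameRay_iff_norm_add, sameRay_smul_smul_iff h1t ht0,
    sameRay_iff_norm_smul_eq]
  constructor
  · intro h; exact (SameRay.sameRay_comm.1 (sameRay_iff_norm_smul_eq.2 h)).norm_smul_eq |>.symm ▸ h.symm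
  · intro h; exact h.symm
end

section
/- Let S ⊆ V be a convex set in a real vector space, let f : V → ℝ be a function with f ≤ L on S such that f((1-t)•ρ + t•σ) = (1-t)f(ρ) + t f(σ) fails only by being ≤ (i.e., f is convex on S). Suppose ρ, σ ∈ S with f(ρ) = f(σ) = L, and suppose t ∉ [0,1] is such that τ := (1-t)•ρ + t•σ ∈ S. Then f(τ) = L. -/
/-! Extrapolating beyond `ρ` (when `t < 0`) or beyond `σ` (when `t > 1`) puts that endpoint strictly
between `τ` and the other endpoint. Along a chord, a convex function that does not decrease from one
end to an interior point does not decrease from there to the other end, so `f τ ≥ L`. -/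

section Extrapolation

variable {𝕜 V : Type*} [Field 𝕜] [LinearOrder 𝕜] [IsStrictOrderedRing 𝕜]
  [AddCommGroup V] [Module 𝕜 V]

theorem left_mem_openSegment_of_neg {t : 𝕜} (ht : t < 0) (ρ σ : V) :
    ρ ∈ openSegment 𝕜 ((1 - t) • ρ + t • σ) σ := by
  have h1t : 1 - t ≠ 0 := by linarith
  refine ⟨1 / (1 - t), -t / (1 - t), by apply div_pos <;> linarith,
    by apply div_pos <;> linarith, by field_simp; ring, ?_⟩
  match_scalars
  · field_simp
  · field_simp; ring

theorem right_mem_openSegment_of_one_lt {t : 𝕜} (ht : 1 < t) (ρ σ : V) :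
    σ ∈ openSegment 𝕜 ρ ((1 - t) • ρ + t • σ) := by
  have ht0 : t ≠ 0 := by linarith
  refine ⟨(t - 1) / t, 1 / t, by apply div_pos <;> linarith,
    by apply div_pos <;> linarith, by field_simp; ring, ?_⟩
  match_scalars
  · field_simp; ring
  · field_simp

end Extrapolation

theorem stmt_6 {V : Type*} [AddCommGroup V] [Module ℝ V]
    (S : Set V) (f : V → ℝ) (L : ℝ)
    (hconv : ConvexOn ℝ S f)
    (hL : ∀ x ∈ S, f x ≤ L)
    (ρ σ : V) (hρ : ρ ∈ S) (hσ : σ ∈ S)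
    (hfρ : f ρ = L) (hfσ : f σ = L)
    (t : ℝ) (ht : t ∉ Set.Icc (0 : ℝ) 1)
    (τ : V) (hτdef : τ = (1 - t) • ρ + t • σ) (hτ : τ ∈ S) :
    f τ = L := by
  refine le_antisymm (hL τ hτ) ?_
  subst hτdef
  rcases not_and_or.mp ht with ht0 | ht1
  · have := hconv.le_left_of_right_le hτ hσ (left_mem_openSegment_of_neg (not_le.mp ht0) ρ σ)
      (hfσ.trans hfρ.symm).le
    rwa [hfρ] at this
  · have := hconv.le_right_of_left_le hρ hτ (right_mem_openSegment_of_one_lt (not_le.mp ht1) ρ σ)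
      (hfρ.trans hfσ.symm).le
    rwa [hfσ] at this
end

section
/- With the hypotheses of the previous statement (f convex on S, f ≤ L on S, f(ρ)=f(σ)=L, and τ=(1-t)ρ+tσ ∈ S for some t>1), for every s ∈ [0,1] the point (1-s)•ρ + s•σ satisfies f = L. -/
theorem stmt_7 {V : Type*} [AddCommGroup V] [Module ℝ V]
    (S : Set V) (f : V → ℝ) (L : ℝ)
    (hconv : ConvexOn ℝ S f)
    (hL : ∀ x ∈ S, f x ≤ L)
    (ρ σ : V) (hρ : ρ ∈ S) (hσ : σ ∈ S)
    (hfρ : f ρ = L) (hfσ : f σ = L)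
    (t : ℝ) (ht : 1 < t)
    (hτ : (1 - t) • ρ + t • σ ∈ S) :
    ∀ s ∈ Set.Icc (0 : ℝ) 1, f ((1 - s) • ρ + s • σ) = L := by
  intro s hs
  obtain ⟨hs0, hs1⟩ := hs
  rcases eq_or_lt_of_le hs1 with h1 | h1
  · subst h1
    simpa using hfσ
  · have hts : 0 < t - s := by linarith
    set a : ℝ := (1 - s) / (t - s) with ha
    have ha0 : 0 ≤ a := div_nonneg (by linarith) hts.le
    have ha1 : a < 1 := by
      rw [ha, div_lt_one hts]; linarith
    have hx : (1 - s) • ρ + s • σ ∈ S :=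
      hconv.1 hρ hσ (by linarith) hs0 (by ring)
    have hcomb : (1 - a) • ((1 - s) • ρ + s • σ) + a • ((1 - t) • ρ + t • σ) = σ := by
      match_scalars
      · rw [ha]; field_simp; ring
      · rw [ha]; field_simp; ring
    have hkey := hconv.2 hx hτ (by linarith : (0:ℝ) ≤ 1 - a) ha0 (by ring)
    rw [hcomb, hfσ] at hkey
    have hfx : f ((1 - s) • ρ + s • σ) ≤ L := hL _ hx
    have hfτ : f ((1 - t) • ρ + t • σ) ≤ L := hL _ hτ
    simp only [smul_eq_mul] at hkey
    have h2 : (1 - a) * L ≤ (1 - a) * f ((1 - s) • ρ + s • σ) := by nlinarith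
    have h3 := le_of_mul_le_mul_left h2 (by linarith : (0:ℝ) < 1 - a)
    linarith
end

section
/- Let p, q ∈ ℝ^d with d(p,q) = L > 0, and let x, y ∈ ℝ^d satisfy d(x,p) + d(p,y) ≤ L and d(y,q) + d(q,x) ≤ L. Then x and y lie on the segment [p,q] and d(x,p) = d(y,q). -/
theorem stmt_10 {d : ℕ} (p q x y : EuclideanSpace ℝ (Fin d)) (L : ℝ)
    (hL : 0 < L) (hpq : dist p q = L)
    (hc1 : dist x p + dist p y ≤ L)
    (hc2 : dist y q + dist q x ≤ L) :
    x ∈ segment ℝ p q ∧ y ∈ segment ℝ p q ∧ dist x p = dist y q := by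
  have t1 : L ≤ dist x p + dist q x := by
    rw [← hpq, dist_comm x p, dist_comm q x]; exact dist_triangle p x q
  have t2 : L ≤ dist p y + dist y q := by
    rw [← hpq]; exact dist_triangle p y q
  have e1 : dist p x + dist x q = dist p q := by
    rw [hpq, dist_comm p x, dist_comm x q]; linarith
  have e2 : dist p y + dist y q = dist p q := by rw [hpq]; linarith
  refine ⟨?_, ?_, by linarith⟩
  · rw [mem_segment_iff_wbtw]; exact dist_add_dist_eq_iff.mp e1
  · rw [mem_segment_iff_wbtw]; exact dist_add_dist_eq_iff.mp e2
end

section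
/- Consider the taut 'straight line' network: anchors p,q ∈ ℝ^d at distance L, a cord (p, x, q) of length L through one free node x. In the network 𝒩_ε where the cord length is L + ε, the node x can be displaced from the segment [p,q] by a perpendicular distance of at least √(εL)/2 for small ε > 0; hence d(ρ,ρ')/ε → ∞ as ε → 0 for suitable configurations ρ of 𝒩 and ρ' of 𝒩_ε. In particular this network is not firm. -/
open RealInnerProductSpace

lemma norm_add_of_inner_zero {E : Type*} [NormedAddCommGroup E] [InnerProductSpace ℝ E]
    (a b : E) (h : ⟪a, b⟫ = 0) : ‖a + b‖ = Real.sqrt (‖a‖ ^ 2 + ‖b‖ ^ 2) := by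
  rw [← Real.sqrt_sq (norm_nonneg (a + b)), norm_add_sq_real, h]
  ring_nf

theorem stmt_19 {d : ℕ} (p q : EuclideanSpace ℝ (Fin d)) (L : ℝ) (hL : 0 < L)
    (hpq : dist p q = L)
    (v : EuclideanSpace ℝ (Fin d)) (hv : ‖v‖ = 1) (hperp : ⟪v, q - p⟫ = 0) :
    (∀ ε ∈ Set.Ioc (0 : ℝ) L, ∀ h : ℝ, |h| ≤ Real.sqrt (ε * L) / 2 →
      dist p (midpoint ℝ p q + h • v) + dist (midpoint ℝ p q + h • v) q ≤ L + ε ∧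
      Metric.infDist (midpoint ℝ p q + h • v) (segment ℝ p q) = |h|) ∧
    ¬ ∃ k : ℝ, ∀ ε > (0 : ℝ), ∀ x : EuclideanSpace ℝ (Fin d),
        dist p x + dist x q ≤ L + ε →
        Metric.infDist x (segment ℝ p q) ≤ k * ε := by
  have hqp : ‖q - p‖ = L := by rw [← dist_eq_norm, dist_comm]; exact hpq
  -- distance from a shifted point on the line to the displaced node
  have key : ∀ (t h : ℝ),
      dist (p + t • (q - p)) (midpoint ℝ p q + h • v)
        = Real.sqrt ((1/2 - t)^2 * L^2 + h^2) := by
    intro t h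
    have hvec : midpoint ℝ p q + h • v - (p + t • (q - p))
        = (1/2 - t) • (q - p) + h • v := by
      rw [midpoint_eq_smul_add]
      simp only [invOf_eq_inv]
      module
    have hin : ⟪(1/2 - t) • (q - p), h • v⟫ = 0 := by
      rw [real_inner_smul_left, real_inner_smul_right, real_inner_comm, hperp]
      ring
    rw [dist_comm, dist_eq_norm, hvec, norm_add_of_inner_zero _ _ hin,
      norm_smul, norm_smul, hqp, hv]
    rw [Real.norm_eq_abs, Real.norm_eq_abs]
    congr 1
    rw [mul_pow, mul_pow, sq_abs, sq_abs]
    ring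
  have main : ∀ ε ∈ Set.Ioc (0 : ℝ) L, ∀ h : ℝ, |h| ≤ Real.sqrt (ε * L) / 2 →
      dist p (midpoint ℝ p q + h • v) + dist (midpoint ℝ p q + h • v) q ≤ L + ε ∧
      Metric.infDist (midpoint ℝ p q + h • v) (segment ℝ p q) = |h| := by
    rintro ε ⟨hε, hεL⟩ h hh
    have hh2 : h ^ 2 ≤ ε * L / 4 := by
      have h1 : |h| ^ 2 ≤ (Real.sqrt (ε * L) / 2) ^ 2 :=
        pow_le_pow_left₀ (abs_nonneg h) hh 2
      have h2 : Real.sqrt (ε * L) ^ 2 = ε * L :=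
        Real.sq_sqrt (by positivity)
      rw [sq_abs] at h1
      nlinarith
    have hd1 : dist p (midpoint ℝ p q + h • v) = Real.sqrt (L^2/4 + h^2) := by
      have := key 0 h
      simp only [zero_smul, add_zero] at this
      rw [this]; congr 1; ring
    have hd2 : dist (midpoint ℝ p q + h • v) q = Real.sqrt (L^2/4 + h^2) := by
      have := key 1 h
      simp only [one_smul, add_sub_cancel] at this
      rw [dist_comm, this]; congr 1; ring
    constructor
    · rw [hd1, hd2]
      have hsq : Real.sqrt (L^2/4 + h^2) ≤ (L + ε) / 2 := by
        rw [show (L + ε)/2 = Real.sqrt (((L+ε)/2)^2) from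
          (Real.sqrt_sq (by positivity)).symm]
        apply Real.sqrt_le_sqrt
        nlinarith
      linarith
    · apply le_antisymm
      · have hm : midpoint ℝ p q ∈ segment ℝ p q := midpoint_mem_segment p q
        calc Metric.infDist (midpoint ℝ p q + h • v) (segment ℝ p q)
            ≤ dist (midpoint ℝ p q + h • v) (midpoint ℝ p q) :=
              Metric.infDist_le_dist_of_mem hm
          _ = |h| := by
              rw [dist_eq_norm, add_sub_cancel_left, norm_smul, hv,
                Real.norm_eq_abs, mul_one]
      · apply le_of_not_gt
        intro hlt
        rw [Metric.infDist_lt_iff ⟨p, left_mem_segment ℝ p q⟩] at hlt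
        obtain ⟨y, hy, hdy⟩ := hlt
        rw [segment_eq_image'] at hy
        obtain ⟨t, _, rfl⟩ := hy
        rw [dist_comm, key t h] at hdy
        have : |h| ≤ Real.sqrt ((1/2 - t)^2 * L^2 + h^2) := by
          rw [show |h| = Real.sqrt (h^2) from (Real.sqrt_sq_eq_abs h).symm]
          apply Real.sqrt_le_sqrt
          nlinarith
        linarith
  refine ⟨main, ?_⟩
  rintro ⟨k, hk⟩
  set κ : ℝ := max k 1 with hκdef
  have hκ1 : (1 : ℝ) ≤ κ := le_max_right _ _
  have hκ0 : (0 : ℝ) < κ := lt_of_lt_of_le one_pos hκ1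
  set ε : ℝ := min L (L / (8 * κ^2)) with hεdef
  have hε0 : 0 < ε := lt_min hL (by positivity)
  have hεL : ε ≤ L := min_le_left _ _
  have hεκ : ε ≤ L / (8 * κ^2) := min_le_right _ _
  set h : ℝ := Real.sqrt (ε * L) / 2 with hhdef
  have hh0 : 0 ≤ h := by positivity
  obtain ⟨hsum, hinf⟩ := main ε ⟨hε0, hεL⟩ h (by rw [abs_of_nonneg hh0])
  have hle : h ≤ k * ε := by
    have := hk ε hε0 _ hsum
    rw [hinf, abs_of_nonneg hh0] at this
    exact this
  have hle' : Real.sqrt (ε * L) ≤ 2 * κ * ε := by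
    have : k * ε ≤ κ * ε := mul_le_mul_of_nonneg_right (le_max_left _ _) hε0.le
    rw [hhdef] at hle
    linarith
  have hsq : ε * L ≤ (2 * κ * ε)^2 := by
    have h2 : Real.sqrt (ε * L) ^ 2 = ε * L := Real.sq_sqrt (by positivity)
    calc ε * L = Real.sqrt (ε * L) ^ 2 := h2.symm
      _ ≤ (2 * κ * ε)^2 := pow_le_pow_left₀ (Real.sqrt_nonneg _) hle' 2
  have hL2 : L ≤ 4 * κ^2 * ε := by
    have := hsq
    nlinarith
  have : 4 * κ^2 * ε ≤ L / 2 := by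
    calc 4 * κ^2 * ε ≤ 4 * κ^2 * (L / (8 * κ^2)) := by
          apply mul_le_mul_of_nonneg_left hεκ (by positivity)
      _ = L / 2 := by field_simp; ring
  linarith
end
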